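/- Let G be a finite tree (a connected acyclic simple graph). Then G is weakly closed if and only if G is a caterpillar, i.e., there exists a path in G such that every vertex of G either lies on the path or is adjacent to a vertex of the path. -/

import Mathlib

/-!
Let `f` be a weakly closed labeling of a connected graph and `P` a path from the vertex with the
smallest label to the vertex with the largest one. The labels of consecutive vertices of `P` span
intervals covering every label, and a vertex whose label lies strictly inside the interval of an
edge `ij` is adjacent to `i` or `j`; so every vertex is on `P` or adjacent to it.

Conversely, let `P` be such a dominating path of a tree, starting at `u`. Label a vertex `v` by
`2 d(u,v) + 1` if it lies on `P` and by `2 d(u,v)` otherwise, breaking ties arbitrarily. No edge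
joins two vertices off `P`, and a vertex off `P` is one step farther from `u` than its neighbours
on `P`; hence it is labelled between its neighbour on `P` and the next vertex of `P`, which is all
that weak closedness asks for.
-/

/-- `G` is weakly closed: some labeling of the vertices by `1, …, n` is such that for
every edge `{i, j}` with `i < j` and every `i < k < j`, `{i,k} ∈ E(G)` or `{k,j} ∈ E(G)`. -/
def WeaklyClosed {V : Type*} [Fintype V] (G : SimpleGraph V) : Prop :=
  ∃ σ : V ≃ Fin (Fintype.card V), ∀ i j k : V,
    G.Adj i j → σ i < σ k → σ k < σ j → G.Adj i k ∨ G.Adj k j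

namespace SimpleGraph

variable {V : Type*} {G : SimpleGraph V}

def IsWeaklyClosedLabeling {α : Type*} [LT α] (G : SimpleGraph V) (f : V → α) : Prop :=
  ∀ i j k : V, G.Adj i j → f i < f k → f k < f j → G.Adj i k ∨ G.Adj k j

theorem IsWeaklyClosedLabeling.mem_support_or_adj {α : Type*} [LinearOrder α] {f : V → α}
    (H : G.IsWeaklyClosedLabeling f) (hf : Function.Injective f) {u w x : V} (p : G.Walk u w)
    (hu : f u ≤ f x) (hw : f x ≤ f w) : x ∈ p.support ∨ ∃ y ∈ p.support, G.Adj x y := by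
  induction p with
  | nil => exact .inl (by simp [hf (le_antisymm hw hu)])
  | @cons u v w huv p ih =>
    rcases lt_or_ge (f v) (f x) with hv | hv
    · rcases ih hv.le hw with hx | ⟨y, hy, hxy⟩
      · exact .inl (by simp [hx])
      · exact .inr ⟨y, by simp [hy], hxy⟩
    rcases hu.eq_or_lt with hu | hu
    · exact .inl (by simp [hf hu])
    rcases hv.eq_or_lt with hv | hv
    · exact .inl (by simp [hf hv])
    rcases H u v x huv hu hv with hux | hxv
    · exact .inr ⟨u, by simp, hux.symm⟩
    · exact .inr ⟨v, by simp, hxv⟩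

theorem IsAcyclic.length_eq_dist_of_isPath (hG : G.IsAcyclic) {u v : V} {p : G.Walk u v}
    (hp : p.IsPath) : p.length = G.dist u v := by
  obtain ⟨q, hq, hql⟩ := p.reachable.exists_path_of_dist
  have hpq : p = q := congrArg Subtype.val ((hG.subsingleton_path u v).elim ⟨p, hp⟩ ⟨q, hq⟩)
  rw [hpq, hql]

theorem IsAcyclic.eq_of_adj_of_dist_add_one_eq (hG : G.IsAcyclic) {u a b v : V}
    (ha : G.Adj a v) (hb : G.Adj b v) (hda : G.dist u a + 1 = G.dist u v)
    (hdb : G.dist u b + 1 = G.dist u v) : a = b := by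
  have hv : G.Reachable u v := Reachable.of_dist_ne_zero (by omega)
  obtain ⟨pa, -, hpa⟩ := (hv.trans ha.symm.reachable).exists_path_of_dist
  obtain ⟨pb, -, hpb⟩ := (hv.trans hb.symm.reachable).exists_path_of_dist
  have hpa' := (pa.concat ha).isPath_of_length_eq_dist (by simp; omega)
  have hpb' := (pb.concat hb).isPath_of_length_eq_dist (by simp; omega)
  exact (Walk.concat_inj (congrArg Subtype.val
    ((hG.subsingleton_path u v).elim ⟨_, hpa'⟩ ⟨_, hpb'⟩))).1

theorem IsAcyclic.injOn_dist_support (hG : G.IsAcyclic) {u w : V} {p : G.Walk u w}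
    (hp : p.IsPath) : Set.InjOn (G.dist u) {v | v ∈ p.support} := by
  classical
  intro v hv v' hv' h
  rw [← p.getVert_length_takeUntil hv, ← p.getVert_length_takeUntil hv',
    hG.length_eq_dist_of_isPath (hp.takeUntil hv),
    hG.length_eq_dist_of_isPath (hp.takeUntil hv'), h]

theorem IsAcyclic.dist_eq_add_one_of_adj_of_notMem_support (hG : G.IsAcyclic) {u w : V}
    {p : G.Walk u w} (hp : p.IsPath) {a x : V} (ha : a ∈ p.support) (hx : x ∉ p.support)
    (hax : G.Adj a x) : G.dist u x = G.dist u a + 1 := by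
  classical
  have hq := (hp.takeUntil ha).concat
    (fun h => hx (p.support_takeUntil_subset_support ha h)) hax
  rw [← hG.length_eq_dist_of_isPath hq, Walk.length_concat,
    hG.length_eq_dist_of_isPath (hp.takeUntil ha)]

theorem IsAcyclic.adj_of_dist_eq_add_one (hG : G.IsAcyclic) {u w : V} {p : G.Walk u w}
    (hp : p.IsPath) {i k : V} (hi : i ∈ p.support) (hk : k ∉ p.support)
    (hkp : ∃ a ∈ p.support, G.Adj k a) (hd : G.dist u k = G.dist u i + 1) : G.Adj i k := by
  obtain ⟨a, ha, hka⟩ := hkp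
  have hda := hG.dist_eq_add_one_of_adj_of_notMem_support hp ha hk hka.symm
  rwa [← hG.injOn_dist_support hp ha hi (by omega), G.adj_comm]

theorem IsTree.not_adj_of_notMem_support (hG : G.IsTree) {u w : V} {p : G.Walk u w}
    (hp : p.IsPath) {a a' x x' : V} (ha : a ∈ p.support) (ha' : a' ∈ p.support)
    (hx : x ∉ p.support) (hx' : x' ∉ p.support) (hax : G.Adj a x) (hax' : G.Adj a' x') :
    ¬ G.Adj x x' := by
  intro h
  have hdx := hG.isAcyclic.dist_eq_add_one_of_adj_of_notMem_support hp ha hx hax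
  have hdx' := hG.isAcyclic.dist_eq_add_one_of_adj_of_notMem_support hp ha' hx' hax'
  rcases hG.dist_eq_dist_add_one_of_adj u h with hd | hd
  · exact hx' (hG.isAcyclic.eq_of_adj_of_dist_add_one_eq h.symm hax hd.symm hdx.symm ▸ ha)
  · exact hx (hG.isAcyclic.eq_of_adj_of_dist_add_one_eq h hax' hd.symm hdx'.symm ▸ ha')

end SimpleGraph

theorem WeaklyClosed.exists_dominating_path {V : Type*} [Fintype V] {G : SimpleGraph V}
    (h : WeaklyClosed G) (hG : G.Connected) :
    ∃ (u w : V) (P : G.Walk u w), P.IsPath ∧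
      ∀ x : V, x ∈ P.support ∨ ∃ y ∈ P.support, G.Adj x y := by
  obtain ⟨σ, H⟩ := h
  have := hG.nonempty
  obtain ⟨u, hu⟩ := Finite.exists_min σ
  obtain ⟨w, hw⟩ := Finite.exists_max σ
  obtain ⟨P, hP, -⟩ := hG.exists_path_of_dist u w
  exact ⟨u, w, P, hP, fun x =>
    SimpleGraph.IsWeaklyClosedLabeling.mem_support_or_adj H σ.injective P (hu x) (hw x)⟩

theorem weaklyClosed_of_labeling_le {V : Type*} [Fintype V] {G : SimpleGraph V}
    {α : Type*} [LinearOrder α] (g : V → α)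
    (hg : ∀ i j k : V, G.Adj i j → k ≠ i → k ≠ j → g i ≤ g k → g k ≤ g j →
      G.Adj i k ∨ G.Adj k j) :
    WeaklyClosed G := by
  let f : V → α ×ₗ Fin (Fintype.card V) := fun v => toLex (g v, Fintype.equivFin V v)
  have hf : Function.Injective f := fun a b hab =>
    (Fintype.equivFin V).injective (congrArg (·.2) (toLex.injective hab))
  let : LinearOrder V := LinearOrder.lift' f hf
  let σ := (Fintype.orderIsoFinOfCardEq V rfl).symm
  refine ⟨σ.toEquiv, fun i j k hij hik hkj => ?_⟩
  replace hik : f i < f k := σ.lt_iff_lt.1 hik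
  replace hkj : f k < f j := σ.lt_iff_lt.1 hkj
  exact hg i j k hij (fun h => hik.ne' (congrArg f h)) (fun h => hkj.ne (congrArg f h))
    (Prod.Lex.monotone_fst _ _ hik.le) (Prod.Lex.monotone_fst _ _ hkj.le)

theorem SimpleGraph.IsTree.weaklyClosed_of_dominating_path {V : Type*} [Fintype V]
    {G : SimpleGraph V} (hG : G.IsTree) {u w : V} {P : G.Walk u w} (hP : P.IsPath)
    (hdom : ∀ x, x ∈ P.support ∨ ∃ y ∈ P.support, G.Adj x y) : WeaklyClosed G := by
  classical
  have hinj := hG.isAcyclic.injOn_dist_support hP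
  refine weaklyClosed_of_labeling_le
    (fun v => 2 * G.dist u v + if v ∈ P.support then 1 else 0) ?_
  intro i j k hij hki hkj hik hkj'
  by_cases hi : i ∈ P.support
  · have hdj : G.dist u j = G.dist u i + 1 := by
      by_cases hj : j ∈ P.support
      · simp only [hi, hj, if_true] at hik hkj'
        rcases hG.dist_eq_dist_add_one_of_adj u hij with h | h <;> omega
      · exact hG.isAcyclic.dist_eq_add_one_of_adj_of_notMem_support hP hi hj hij
    by_cases hk : k ∈ P.support
    · simp only [hi, hk, if_true] at hik hkj'
      have hd : G.dist u k = G.dist u i ∨ G.dist u k = G.dist u j := by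
        split_ifs at hkj' <;> omega
      rcases hd with hd | hd
      · exact absurd (hinj hk hi hd) hki
      · have hj : j ∈ P.support := by
          by_contra hj
          simp only [hj, if_false] at hkj'
          omega
        exact absurd (hinj hk hj hd) hkj
    · simp only [hi, hk, if_true, if_false] at hik hkj'
      refine .inl (hG.isAcyclic.adj_of_dist_eq_add_one hP hi hk ((hdom k).resolve_left hk) ?_)
      split_ifs at hkj' <;> omega
  · by_cases hj : j ∈ P.support
    · have hdi := hG.isAcyclic.dist_eq_add_one_of_adj_of_notMem_support hP hj hi hij.symm
      simp only [hi, hj, if_true, if_false] at hik hkj'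
      split_ifs at hik hkj' <;> omega
    · obtain ⟨a, ha, hia⟩ := (hdom i).resolve_left hi
      obtain ⟨b, hb, hjb⟩ := (hdom j).resolve_left hj
      exact absurd hij (hG.not_adj_of_notMem_support hP ha hb hi hj hia.symm hjb.symm)

/-- A finite tree is weakly closed iff it is a caterpillar: there is a path such that
every vertex lies on the path or is adjacent to a vertex of the path. -/
theorem tree_weaklyClosed_iff_caterpillar {V : Type*} [Fintype V] (G : SimpleGraph V)
    (hG : G.IsTree) :
    WeaklyClosed G ↔
      ∃ (u w : V) (P : G.Walk u w), P.IsPath ∧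
        ∀ x : V, x ∈ P.support ∨ ∃ y ∈ P.support, G.Adj x y :=
  ⟨fun h => h.exists_dominating_path hG.connected,
    fun ⟨_, _, _, hP, hdom⟩ => hG.weaklyClosed_of_dominating_path hP hdom⟩
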